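/- Let q ≥ 2 and define, as elements of the formal power series ring ℚ[[u]], a = -(1-q^3u^6)((q-1)u+q^2(q-1)u^4)/(1-q^4u^6) and for s ≥ 2, a_s = (-q^2(q-1)u^{2s+2}(1-q^3u^6) - q^3(q-1)^2 u^{2s+5})/(1-q^4u^6). Then the limit determinant expression D(u) = (1-q^2(q-1)u^3)(1 + Σ_{s=2}^∞ q^{4s-5}u^{4s-5} a_s) + q^3u^3·a·Σ_{i=1}^∞ q^{2i-2}(q-1)u^{3i-1} equals (1-q^3u^6)(1-q^3u^3)/((1-q^4u^6)(1-q^2u^3)). -/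

import Mathlib

/-!
Both infinite sums are geometric. Consecutive terms `q^{4s-5}u^{4s-5}aₛ` differ by the factor
`q⁴u⁶`, so `(1 - q⁴u⁶) Σₛ = q³u³a₂`; and `(1 - q²u³) Σᵢ q^{2i-2}(q-1)u^{3i-1} = (q-1)u²`.
Multiplying through by `(1 - q⁴u⁶)²(1 - q²u³)` turns the claim into a polynomial identity.
-/

open PowerSeries Finset

namespace PowerSeries

variable {R : Type*} [CommRing R]

theorem coeff_mul_eq_of_coeff_eq {f g : R⟦X⟧} (h : R⟦X⟧) {n : ℕ}
    (hfg : ∀ i ≤ n, coeff i f = coeff i g) : coeff n (f * h) = coeff n (g * h) := by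
  simp only [coeff_mul]
  exact sum_congr rfl fun p hp => by rw [hfg p.1 (HasAntidiagonal.antidiagonal.fst_le hp)]

theorem sum_range_mul_one_sub_eq {T : ℕ → R⟦X⟧} {r : R⟦X⟧} {s₀ : ℕ}
    (hstep : ∀ s, s₀ ≤ s → T (s + 1) = r * T s) (m : ℕ) :
    (∑ j ∈ range m, T (s₀ + j)) * (1 - r) = T s₀ - T (s₀ + m) := by
  rw [sum_mul]
  refine (sum_congr rfl fun j _ => ?_).trans (sum_range_sub' (fun j => T (s₀ + j)) m)
  rw [← add_assoc, hstep _ (Nat.le_add_right s₀ j)]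
  ring

theorem coeff_eq_sum_range_of_vanishing {T : ℕ → R⟦X⟧} {s₀ n M m : ℕ}
    (hT : ∀ s, M < s → coeff n (T s) = 0) (hm : M + 1 - s₀ ≤ m) :
    ∑ s ∈ Icc s₀ M, coeff n (T s) = ∑ j ∈ range m, coeff n (T (s₀ + j)) := by
  rw [← Ico_add_one_right_eq_Icc, sum_Ico_eq_sum_range]
  refine sum_subset (range_subset_range.2 hm) fun j hj hj' => hT _ ?_
  simp only [mem_range] at hj hj'
  omega

theorem mk_sum_Icc_mul_one_sub_eq {T : ℕ → R⟦X⟧} {r : R⟦X⟧} {s₀ : ℕ} {N : ℕ → ℕ}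
    (hT : ∀ n s, N n < s → coeff n (T s) = 0) (hstep : ∀ s, s₀ ≤ s → T (s + 1) = r * T s) :
    (mk fun n => ∑ s ∈ Icc s₀ (N n), coeff n (T s)) * (1 - r) = T s₀ := by
  ext n
  -- In degrees `≤ n` the series agrees with a finite partial sum, which telescopes against `1 - r`.
  set m := (range (n + 1)).sup fun i => N i + 1
  have hm : ∀ i ≤ n, N i + 1 - s₀ ≤ m := fun i hi =>
    (Nat.sub_le _ _).trans (le_sup (f := fun i => N i + 1) (mem_range.2 (Nat.lt_succ_of_le hi)))
  rw [coeff_mul_eq_of_coeff_eq (g := ∑ j ∈ range m, T (s₀ + j)) _ fun i hi => by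
      rw [coeff_mk, coeff_eq_sum_range_of_vanishing (hT i) (hm i hi), map_sum],
    sum_range_mul_one_sub_eq hstep, map_sub, hT n (s₀ + m) (by have := hm n le_rfl; omega),
    sub_zero]

theorem mk_periodic_geometric_mul_one_sub_eq {k r : ℕ} (hr : r < k) (c b : R) :
    (mk fun n => if n % k = r then c ^ (n / k) * b else 0) * (1 - C c * X ^ k) = C b * X ^ r := by
  ext n
  rw [mul_sub, mul_one, ← mul_assoc, mul_comm _ (C c), mul_assoc, map_sub, coeff_C_mul,
    coeff_mul_X_pow', coeff_C_mul_X_pow, coeff_mk]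
  rcases le_or_gt k n with hkn | hnk
  · obtain ⟨m, rfl⟩ := Nat.exists_eq_add_of_le' hkn
    rw [if_pos hkn, if_neg (show m + k ≠ r by omega), Nat.add_sub_cancel, coeff_mk,
      Nat.add_mod_right, Nat.add_div_right _ (by omega)]
    split_ifs <;> ring
  · rw [if_neg (show ¬k ≤ n by omega), Nat.mod_eq_of_lt hnk, Nat.div_eq_of_lt hnk, pow_zero,
      one_mul, mul_zero, sub_zero]

theorem mk_sum_Icc_C_pow_mul_X_pow_mul_one_sub_eq {c : R} {A : ℕ → R⟦X⟧}
    (hA : ∀ s, 2 ≤ s → A (s + 1) = X ^ 2 * A s) :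
    (mk fun n => ∑ s ∈ Icc 2 (n + 2), coeff n (C (c ^ (4 * s - 5)) * X ^ (4 * s - 5) * A s)) *
      (1 - C (c ^ 4) * X ^ 6) = C (c ^ 3) * X ^ 3 * A 2 := by
  refine mk_sum_Icc_mul_one_sub_eq (fun n s hs => ?_) fun s hs => ?_
  · rw [mul_comm (C _), mul_assoc, coeff_X_pow_mul', if_neg (by omega)]
  · rw [hA s hs, show 4 * (s + 1) - 5 = 4 * s - 5 + 4 by omega, pow_add c, map_mul]
    ring

theorem mk_geometric_mod_three_mul_one_sub_eq (c b : R) :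
    (mk fun n => if n % 3 = 2 then c ^ ((2 * n - 4) / 3) * b else 0) *
      (1 - C (c ^ 2) * X ^ 3) = C b * X ^ 2 := by
  convert mk_periodic_geometric_mul_one_sub_eq (show 2 < 3 by norm_num) (c ^ 2) b using 3
  ext n
  split_ifs
  · rw [← pow_mul]
    congr 2
    omega
  · rfl

end PowerSeries

theorem stmt12_general (q : ℤ)
    (a : PowerSeries ℚ)
    (ha : a = -((1 - C ((q : ℚ) ^ 3) * X ^ 6) *
      (C ((q : ℚ) - 1) * X + C ((q : ℚ) ^ 2 * ((q : ℚ) - 1)) * X ^ 4)) *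
      (1 - C ((q : ℚ) ^ 4) * X ^ 6)⁻¹)
    (aS : ℕ → PowerSeries ℚ)
    (haS : ∀ s : ℕ, 2 ≤ s → aS s =
      (-(C ((q : ℚ) ^ 2 * ((q : ℚ) - 1)) * X ^ (2 * s + 2) *
          (1 - C ((q : ℚ) ^ 3) * X ^ 6)) -
        C ((q : ℚ) ^ 3 * ((q : ℚ) - 1) ^ 2) * X ^ (2 * s + 5)) *
      (1 - C ((q : ℚ) ^ 4) * X ^ 6)⁻¹)
    (Sum1 : PowerSeries ℚ)
    (hSum1 : Sum1 = PowerSeries.mk fun n => ∑ s ∈ Finset.Icc 2 (n + 2),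
      coeff n (C ((q : ℚ) ^ (4 * s - 5)) * X ^ (4 * s - 5) * aS s))
    (Sum2 : PowerSeries ℚ)
    (hSum2 : Sum2 = PowerSeries.mk fun n =>
      if n % 3 = 2 then (q : ℚ) ^ ((2 * n - 4) / 3) * ((q : ℚ) - 1) else 0) :
    (1 - C ((q : ℚ) ^ 2 * ((q : ℚ) - 1)) * X ^ 3) * (1 + Sum1) +
      C ((q : ℚ) ^ 3) * X ^ 3 * a * Sum2 =
    ((1 - C ((q : ℚ) ^ 3) * X ^ 6) * (1 - C ((q : ℚ) ^ 3) * X ^ 3)) *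
      ((1 - C ((q : ℚ) ^ 4) * X ^ 6) * (1 - C ((q : ℚ) ^ 2) * X ^ 3))⁻¹ := by
  have hd : constantCoeff (1 - C ((q : ℚ) ^ 4) * X ^ 6) ≠ 0 := by simp
  have ha_mul := (eq_mul_inv_iff_mul_eq hd).1 ha
  have haS₂_mul := (eq_mul_inv_iff_mul_eq hd).1 (haS 2 le_rfl)
  have haS_succ : ∀ s, 2 ≤ s → aS (s + 1) = X ^ 2 * aS s := fun s hs => by
    rw [haS s hs, haS (s + 1) (by omega)]
    ring
  have hSum1_mul := hSum1 ▸ mk_sum_Icc_C_pow_mul_X_pow_mul_one_sub_eq (c := (q : ℚ)) haS_succ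
  have hSum2_mul := hSum2 ▸ mk_geometric_mod_three_mul_one_sub_eq (q : ℚ) ((q : ℚ) - 1)
  rw [eq_mul_inv_iff_mul_eq (by simp)]
  -- `Sum1` still carries the denominator of `aS 2`, so clear `1 - q⁴X⁶` once more.
  refine mul_right_cancel₀ (show (1 - C ((q : ℚ) ^ 4) * X ^ 6) ≠ 0 from
    fun h => hd (by rw [h, map_zero])) ?_
  linear_combination (norm := skip)
    C ((q : ℚ) ^ 3) * X ^ 3 * Sum2 * (1 - C ((q : ℚ) ^ 2) * X ^ 3) *
        (1 - C ((q : ℚ) ^ 4) * X ^ 6) * ha_mul +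
      (1 - C ((q : ℚ) ^ 2 * ((q : ℚ) - 1)) * X ^ 3) * (1 - C ((q : ℚ) ^ 2) * X ^ 3) *
        C ((q : ℚ) ^ 3) * X ^ 3 * haS₂_mul +
      (1 - C ((q : ℚ) ^ 2 * ((q : ℚ) - 1)) * X ^ 3) * (1 - C ((q : ℚ) ^ 2) * X ^ 3) *
        (1 - C ((q : ℚ) ^ 4) * X ^ 6) * hSum1_mul -
      C ((q : ℚ) ^ 3) * X ^ 3 * ((1 - C ((q : ℚ) ^ 3) * X ^ 6) *
        (C ((q : ℚ) - 1) * X + C ((q : ℚ) ^ 2 * ((q : ℚ) - 1)) * X ^ 4)) *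
        (1 - C ((q : ℚ) ^ 4) * X ^ 6) * hSum2_mul
  simp only [map_mul, map_pow, map_sub, map_one]
  ring

/-- Let `q ≥ 2` and set, in `ℚ[[u]]`,
`a = -(1-q³u⁶)((q-1)u + q²(q-1)u⁴)/(1-q⁴u⁶)` and, for `s ≥ 2`,
`aₛ = (-q²(q-1)u^{2s+2}(1-q³u⁶) - q³(q-1)²u^{2s+5})/(1-q⁴u⁶)`.  Then the stabilized
determinant expression
`D(u) = (1-q²(q-1)u³)(1 + Σ_{s=2}^∞ q^{4s-5}u^{4s-5} aₛ) + q³u³·a·Σ_{i=1}^∞ q^{2i-2}(q-1)u^{3i-1}`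
equals `(1-q³u⁶)(1-q³u³)/((1-q⁴u⁶)(1-q²u³))`.  The infinite sums are encoded
coefficientwise (in degree `n` only finitely many terms contribute, since
`q^{4s-5}u^{4s-5}aₛ` has order ≥ `6s-3`). -/
theorem stmt12 (q : ℤ) (hq : 2 ≤ q)
    (a : PowerSeries ℚ)
    (ha : a = -((1 - C ((q : ℚ) ^ 3) * X ^ 6) *
      (C ((q : ℚ) - 1) * X + C ((q : ℚ) ^ 2 * ((q : ℚ) - 1)) * X ^ 4)) *
      (1 - C ((q : ℚ) ^ 4) * X ^ 6)⁻¹)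
    (aS : ℕ → PowerSeries ℚ)
    (haS : ∀ s : ℕ, 2 ≤ s → aS s =
      (-(C ((q : ℚ) ^ 2 * ((q : ℚ) - 1)) * X ^ (2 * s + 2) *
          (1 - C ((q : ℚ) ^ 3) * X ^ 6)) -
        C ((q : ℚ) ^ 3 * ((q : ℚ) - 1) ^ 2) * X ^ (2 * s + 5)) *
      (1 - C ((q : ℚ) ^ 4) * X ^ 6)⁻¹)
    (Sum1 : PowerSeries ℚ)
    (hSum1 : Sum1 = PowerSeries.mk fun n => ∑ s ∈ Finset.Icc 2 (n + 2),
      coeff n (C ((q : ℚ) ^ (4 * s - 5)) * X ^ (4 * s - 5) * aS s))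
    (Sum2 : PowerSeries ℚ)
    (hSum2 : Sum2 = PowerSeries.mk fun n =>
      if n % 3 = 2 then (q : ℚ) ^ ((2 * n - 4) / 3) * ((q : ℚ) - 1) else 0) :
    (1 - C ((q : ℚ) ^ 2 * ((q : ℚ) - 1)) * X ^ 3) * (1 + Sum1) +
      C ((q : ℚ) ^ 3) * X ^ 3 * a * Sum2 =
    ((1 - C ((q : ℚ) ^ 3) * X ^ 6) * (1 - C ((q : ℚ) ^ 3) * X ^ 3)) *
      ((1 - C ((q : ℚ) ^ 4) * X ^ 6) * (1 - C ((q : ℚ) ^ 2) * X ^ 3))⁻¹ :=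
  stmt12_general q a ha aS haS Sum1 hSum1 Sum2 hSum2
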